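/- arXiv:1101.1781 — 2 statements merged into one kernel-verified Lean document; each statement's English description precedes it below -/
import Mathlib

section
/- Let n ≥ 2 and let a_1 ≥ ... ≥ a_n ≥ 1 be integers with a_1 ≤ n - 1. Then the ideal I_{≥t} with I = (x_1^{a_1}, ..., x_n^{a_n}) and t = a_2 + ... + a_n is a stable monomial ideal; that is, for every monomial u ∈ I_{≥t} and every j < m(u), where m(u) = max{i : x_i divides u}, the monomial x_j·u/x_{m(u)} also lies in I_{≥t}. -/
open MvPolynomial

noncomputable section

/-- The ideal generated by all monomials of `I` of total degree at least `t`. -/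
def trunc {K : Type*} [Field K] {n : ℕ} (I : Ideal (MvPolynomial (Fin n) K)) (t : ℕ) :
    Ideal (MvPolynomial (Fin n) K) :=
  Ideal.span { p | ∃ v : Fin n →₀ ℕ, p = monomial v (1 : K) ∧ p ∈ I ∧ t ≤ v.sum fun _ e => e }

/-- A monomial ideal `J` is stable if for every monomial `x^v ∈ J` and every `j < m(v)`,
where `m(v)` is the largest index of a variable dividing `x^v`, the monomial
`x_j · x^v / x_{m(v)}` also lies in `J`. -/
def IsStable {K : Type*} [Field K] {n : ℕ} (J : Ideal (MvPolynomial (Fin n) K)) : Prop :=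
  ∀ v : Fin n →₀ ℕ, monomial v (1 : K) ∈ J →
    ∀ m : Fin n, m ∈ v.support → (∀ i ∈ v.support, i ≤ m) →
      ∀ j : Fin n, j < m →
        monomial (v - Finsupp.single m 1 + Finsupp.single j 1) (1 : K) ∈ J

/-!
Since `a₁ ≤ n - 1`, the degree `t = a₂ + ⋯ + aₙ` exceeds `∑ (aᵢ - 1)`, the top degree of a
monomial outside `I = (x₁^{a₁}, …, xₙ^{aₙ})`. Hence `I_{≥t}` contains every monomial of degree
at least `t`, and moving one exponent from `x_{m(u)}` to `x_j` does not change the degree.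
-/

namespace MvPolynomial

variable {σ R : Type*} [CommSemiring R] [Nontrivial R]

theorem monomial_one_mem_span_X_pow_iff (a : σ → ℕ) (w : σ →₀ ℕ) :
    monomial w (1 : R) ∈ Ideal.span (Set.range fun i => (X i : MvPolynomial σ R) ^ a i) ↔
      ∃ i, a i ≤ w i := by
  have hgen : (Set.range fun i => (X i : MvPolynomial σ R) ^ a i) =
      (fun s => monomial s (1 : R)) '' Set.range fun i => Finsupp.single i (a i) := by
    rw [← Set.range_comp]
    simp only [Function.comp_def, X_pow_eq_monomial]
  classical
  rw [hgen, mem_ideal_span_monomial_image]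
  simp [support_monomial, Finsupp.single_le_iff]

theorem monomial_one_mem_span_X_pow_of_sum_tsub_one_lt [Fintype σ] {a : σ → ℕ} {w : σ →₀ ℕ}
    (hw : ∑ i, (a i - 1) < w.degree) :
    monomial w (1 : R) ∈ Ideal.span (Set.range fun i => (X i : MvPolynomial σ R) ^ a i) := by
  rw [Finsupp.degree_eq_sum] at hw
  obtain ⟨i, -, hi⟩ := Finset.exists_lt_of_sum_lt hw
  exact (monomial_one_mem_span_X_pow_iff a w).mpr ⟨i, by omega⟩

end MvPolynomial

theorem monomial_one_mem_trunc_iff {K : Type*} [Field K] {n : ℕ}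
    (I : Ideal (MvPolynomial (Fin n) K)) (t : ℕ) (v : Fin n →₀ ℕ) :
    monomial v (1 : K) ∈ trunc I t ↔ monomial v (1 : K) ∈ I ∧ t ≤ v.degree := by
  have hgen : { p | ∃ w : Fin n →₀ ℕ, p = monomial w (1 : K) ∧ p ∈ I ∧
      t ≤ w.sum fun _ e => e } =
      (fun s => monomial s (1 : K)) '' { w | monomial w (1 : K) ∈ I ∧ t ≤ w.degree } := by
    ext p
    constructor
    · rintro ⟨w, rfl, hw⟩
      exact ⟨w, hw, rfl⟩
    · rintro ⟨w, hw, rfl⟩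
      exact ⟨w, rfl, hw⟩
  classical
  rw [trunc, hgen, mem_ideal_span_monomial_image]
  simp only [support_monomial, one_ne_zero, if_false, Finset.mem_singleton, forall_eq]
  constructor
  · rintro ⟨w, ⟨hwI, hwt⟩, hwv⟩
    refine ⟨?_, hwt.trans (Finsupp.degree_mono hwv)⟩
    rw [← tsub_add_cancel_of_le hwv, ← mul_one (1 : K), ← monomial_mul]
    exact I.mul_mem_left _ hwI
  · exact fun hv => ⟨v, hv, le_rfl⟩

theorem Finsupp.degree_tsub_single_add_single {σ : Type*} {v : σ →₀ ℕ} {m : σ}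
    (hm : m ∈ v.support) (j : σ) : (v - single m 1 + single j 1).degree = v.degree := by
  have hle : single m 1 ≤ v :=
    single_le_iff.mpr (Nat.one_le_iff_ne_zero.mpr (mem_support_iff.mp hm))
  conv_rhs => rw [← tsub_add_cancel_of_le hle]
  simp only [map_add, degree_single]

theorem isStable_of_monomial_mem_iff_le_degree {K : Type*} [Field K] {n : ℕ}
    {J : Ideal (MvPolynomial (Fin n) K)} {t : ℕ}
    (hJ : ∀ v : Fin n →₀ ℕ, monomial v (1 : K) ∈ J ↔ t ≤ v.degree) : IsStable J := by
  intro v hv m hm _ j _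
  rw [hJ] at hv ⊢
  rwa [Finsupp.degree_tsub_single_add_single hm]

theorem sum_tsub_one_lt_sum_erase {ι : Type*} [Fintype ι] [DecidableEq ι] {a : ι → ℕ}
    (hpos : ∀ i, 1 ≤ a i) {i₀ : ι} (hi₀ : a i₀ < Fintype.card ι) :
    ∑ i, (a i - 1) < ∑ i ∈ Finset.univ.erase i₀, a i := by
  have hsum : ∑ i, (a i - 1) + Fintype.card ι = ∑ i, a i := by
    rw [Finset.card_univ.symm, Finset.card_eq_sum_ones, ← Finset.sum_add_distrib]
    exact Finset.sum_congr rfl fun i _ => Nat.sub_add_cancel (hpos i)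
  have hsplit := Finset.sum_erase_add Finset.univ a (Finset.mem_univ i₀)
  omega

/-- With `n ≥ 2`, `n-1 ≥ a_1 ≥ ⋯ ≥ a_n ≥ 1` and `t = a_2 + ⋯ + a_n`,
the ideal `I_{≥t}` with `I = (x_1^{a_1},…,x_n^{a_n})` is stable. -/
theorem stmt2 {K : Type*} [Field K] {n : ℕ} (hn : 2 ≤ n) (a : Fin n → ℕ)
    (hpos : ∀ i, 1 ≤ a i)
    (hbound : a ⟨0, by omega⟩ ≤ n - 1) :
    IsStable (trunc (Ideal.span (Set.range fun i : Fin n => (X i : MvPolynomial (Fin n) K) ^ a i))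
      (∑ i ∈ Finset.univ.erase (⟨0, by omega⟩ : Fin n), a i)) := by
  have hsocle := sum_tsub_one_lt_sum_erase hpos
    (i₀ := ⟨0, by omega⟩) (by rw [Fintype.card_fin]; omega)
  refine isStable_of_monomial_mem_iff_le_degree (t := ∑ i ∈ Finset.univ.erase ⟨0, by omega⟩, a i)
    fun v => ?_
  rw [monomial_one_mem_trunc_iff]
  exact ⟨And.right, fun ht =>
    ⟨monomial_one_mem_span_X_pow_of_sum_tsub_one_lt (hsocle.trans_le ht), ht⟩⟩
end
end

section
/- Let I^{[*]}(H) be the special dual of the inclusion ideal of a uniformly increasing hypergraph H on n vertices with containment vector a (with entries a_1 ≥ ... ≥ a_n). Then reg(I^{[*]}(H)) ≤ a_2 + a_3 + ... + a_n. -/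
open MvPolynomial

noncomputable section

/-- The containment vector of a hypergraph with edges `E`: `a j` is the number of
edges containing the vertex `j`. -/
def contVec {n s : ℕ} (E : Fin s → Finset (Fin n)) (j : Fin n) : ℕ :=
  (Finset.univ.filter fun i : Fin s => j ∈ E i).card

/-- The exponent vector `b_i` of the `i`-th minimal generator
`x^{b_i} = ∏_{x ∈ E_i} x^{s-i+1}` of the inclusion ideal (here `i : Fin s` is
zero-based, so the exponent is `s - i`). -/
def expVec {n s : ℕ} (E : Fin s → Finset (Fin n)) (i : Fin s) : Fin n →₀ ℕ :=
  Finsupp.ofSupportFinite (fun j => if j ∈ E i then s - i.val else 0) (Set.toFinite _)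

/-- The inclusion ideal `I(H)` of a uniformly increasing hypergraph. -/
def inclIdeal (K : Type*) [Field K] {n s : ℕ} (E : Fin s → Finset (Fin n)) :
    Ideal (MvPolynomial (Fin n) K) :=
  Ideal.span (Set.range fun i : Fin s => monomial (expVec E i) (1 : K))

/-- The special dual `I^{[*]}(H) = ⋂_i m^{a∖b_i}`: the Alexander dual of the inclusion
ideal with respect to the containment vector `a`. -/
def specialDual (K : Type*) [Field K] {n s : ℕ} (E : Fin s → Finset (Fin n)) :
    Ideal (MvPolynomial (Fin n) K) :=
  ⨅ i : Fin s, Ideal.span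
    ((fun j => (X j : MvPolynomial (Fin n) K) ^ (contVec E j + 1 - expVec E i j)) ''
      (E i : Set (Fin n)))

/-- `RegLE I e` says that the Castelnuovo–Mumford regularity of `I` is at most `e`.
This is expressed through the standard characterization: there exists a graded free
resolution `⋯ → F_i → ⋯ → F_0 → I → 0` of `I` (with `F_i` free on a finite set `σ i`
of homogeneous generators of degrees `deg i`, the differentials and the augmentation
being graded of degree `0`) in which `F_i` is generated in degrees `≤ e + i` for all
`i`.  The minimal graded free resolution realizes `reg I` exactly, so this holds iff
`reg I ≤ e`. -/
def RegLE {K : Type*} [Field K] {n : ℕ} (I : Ideal (MvPolynomial (Fin n) K)) (e : ℕ) :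
    Prop :=
  ∃ (σ : ℕ → Type) (_ : ∀ i, Finite (σ i)) (deg : ∀ i, σ i → ℕ)
    (d : ∀ i : ℕ, (σ (i + 1) →₀ MvPolynomial (Fin n) K) →ₗ[MvPolynomial (Fin n) K]
        (σ i →₀ MvPolynomial (Fin n) K))
    (ε : (σ 0 →₀ MvPolynomial (Fin n) K) →ₗ[MvPolynomial (Fin n) K]
        MvPolynomial (Fin n) K),
    -- the augmentation maps onto `I`
    LinearMap.range ε = I ∧
    -- the augmentation is graded: the image of a generator of degree `deg 0 k`
    -- is homogeneous of degree `deg 0 k`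
    (∀ k : σ 0, ε (Finsupp.single k 1) ∈ homogeneousSubmodule (Fin n) K (deg 0 k)) ∧
    -- the differentials are graded of degree `0`
    (∀ (i : ℕ) (j : σ (i + 1)) (k : σ i),
        (d i (Finsupp.single j 1)) k ∈
            homogeneousSubmodule (Fin n) K (deg (i + 1) j - deg i k) ∧
          (deg (i + 1) j < deg i k → (d i (Finsupp.single j 1)) k = 0)) ∧
    -- exactness
    LinearMap.range (d 0) = LinearMap.ker ε ∧
    (∀ i : ℕ, LinearMap.range (d (i + 1)) = LinearMap.ker (d i)) ∧
    -- `F_i` is generated in degrees at most `e + i`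
    (∀ (i : ℕ) (j : σ i), deg i j ≤ e + i)

/-! A monomial `x^w` lies in the `i`-th component `m^{a∖b_i}` exactly when some vertex `j`
has `i` in its window `[s - a_j, s - a_j + w_j)` (vertex `j` belongs to the edges `E_i` with
`i ≥ s - a_j`). So `I^{[*]}(H)` is generated by the covers of `{0, …, s-1}` by such windows,
and shrinking windows one may take `w ≤ a` with `w_j = a_j` for at most one `j`.
The Taylor resolution of these generators bounds the regularity by `deg lcm(S) - |S| + 1` over
nonempty sets `S` of generators. At most `|S|` coordinates of `lcm(S)` reach `a_j`, so
`deg lcm(S) ≤ ∑ a_j - n + |S|`. Vertex `1` lies in every edge, so `a_1 = s`, while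
`n = |E_s| ≥ s + 1`; this gives the bound. -/

open Finset

theorem Fin.sum_sum_neg_one_pow_smul_removeNth_removeNth {R M α : Type*} [Ring R]
    [AddCommGroup M] [Module R M] {k : ℕ} (F : (Fin k → α) → M) (t : Fin (k + 2) → α) :
    ∑ i : Fin (k + 2), ∑ j : Fin (k + 1),
      (-1 : R) ^ ((i : ℕ) + j) • F (j.removeNth (i.removeNth t)) = 0 := by
  rw [← Finset.sum_product']
  refine Finset.sum_ninvolution (fun p => (p.1.succAbove p.2, p.2.predAbove p.1))
    (fun p => ?_) (fun p _ h => ?_) (fun _ => mem_univ _) (fun p => ?_)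
  · rw [Fin.removeNth_removeNth_eq_swap t p.2 p.1, Fin.neg_one_pow_succAbove_add_predAbove,
      neg_smul, add_neg_cancel]
  · exact Fin.succAbove_ne p.1 p.2 (congrArg Prod.fst h)
  · exact Prod.ext (Fin.succAbove_succAbove_predAbove _ _) (Fin.predAbove_predAbove_succAbove _ _)

theorem Fin.removeNth_succ_cons {α : Type*} {k : ℕ} (l : Fin (k + 1)) (a : α)
    (t : Fin (k + 1) → α) :
    l.succ.removeNth (Fin.cons a t : Fin (k + 2) → α) = Fin.cons a (l.removeNth t) := by
  ext j
  cases j using Fin.cases <;> simp [Fin.removeNth_apply, Fin.succ_succAbove_succ]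

theorem Finsupp.degree_tsub_of_le {σ : Type*} {u v : σ →₀ ℕ} (h : v ≤ u) :
    (u - v).degree = u.degree - v.degree := by
  have := congrArg Finsupp.degree (tsub_add_cancel_of_le h)
  rw [map_add] at this
  omega

theorem LinearMap.range_eq_ker_of_homotopy {R M₁ M₂ M₃ : Type*} [Ring R] [AddCommGroup M₁]
    [AddCommGroup M₂] [AddCommGroup M₃] [Module R M₁] [Module R M₂] [Module R M₃]
    {f : M₁ →ₗ[R] M₂} {g : M₂ →ₗ[R] M₃} (hgf : g ∘ₗ f = 0) (h₁ : M₂ → M₁) (h₂ : M₃ → M₂)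
    (h₂_zero : h₂ 0 = 0) (hh : ∀ x, f (h₁ x) + h₂ (g x) = x) :
    LinearMap.range f = LinearMap.ker g := by
  refine le_antisymm (LinearMap.range_le_ker_iff.2 hgf) fun x hx => ⟨h₁ x, ?_⟩
  simpa [LinearMap.mem_ker.1 hx, h₂_zero] using hh x

theorem Finsupp.degree_sup_add_card_le {ι σ : Type*} [Fintype σ] {a : σ → ℕ}
    {c : ι → σ →₀ ℕ} {S : Finset ι} (hS : S.Nonempty) (hle : ∀ g ∈ S, ∀ j, c g j ≤ a j)
    (hfull : ∀ g ∈ S, #{j | c g j = a j} ≤ 1) :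
    (S.sup c).degree + Fintype.card σ ≤ ∑ j, a j + #S := by
  classical
  have hsup (j : σ) : (S.sup c) j = S.sup fun g => c g j :=
    apply_sup_eq_sup_comp (fun u : σ →₀ ℕ => u j) (fun _ _ => rfl) rfl
  set full : Finset σ := {j | (S.sup c) j = a j}
  have hfull_card : #full ≤ #S := calc
    #full ≤ #(S.biUnion fun g => {j | c g j = a j}) := card_le_card fun j hj => by
        obtain ⟨g, hg, hgj⟩ := exists_mem_eq_sup S hS fun g => c g j
        rw [mem_filter, hsup, hgj] at hj
        exact mem_biUnion.2 ⟨g, hg, mem_filter.2 ⟨mem_univ _, hj.2⟩⟩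
    _ ≤ ∑ g ∈ S, #{j | c g j = a j} := card_biUnion_le
    _ ≤ ∑ _g ∈ S, 1 := Finset.sum_le_sum hfull
    _ = #S := (card_eq_sum_ones S).symm
  have hj (j : σ) : (S.sup c) j + 1 ≤ a j + if j ∈ full then 1 else 0 := by
    have : (S.sup c) j ≤ a j := (hsup j).trans_le (Finset.sup_le fun g hg => hle g hg j)
    split_ifs with h
    · exact Nat.add_le_add_right this 1
    · exact lt_of_le_of_ne this (fun h' => h (mem_filter.2 ⟨mem_univ _, h'⟩))
  calc (S.sup c).degree + Fintype.card σ = ∑ j, ((S.sup c) j + 1) := by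
        rw [degree_eq_sum, sum_add_distrib, sum_const, card_univ, smul_eq_mul, mul_one]
    _ ≤ ∑ j, (a j + if j ∈ full then 1 else 0) := Finset.sum_le_sum fun j _ => hj j
    _ = ∑ j, a j + #full := by
        rw [sum_add_distrib, sum_boole, filter_mem_eq_inter, univ_inter, Nat.cast_id]
    _ ≤ ∑ j, a j + #S := Nat.add_le_add_left hfull_card _

namespace TaylorComplex

variable {σ K ι : Type*} [CommRing K] (m : ι → σ →₀ ℕ)

def lcmExp {k : ℕ} (t : Fin k → ι) : σ →₀ ℕ :=
  univ.sup (m ∘ t)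

lemma le_lcmExp {k : ℕ} (t : Fin k → ι) (l : Fin k) : m (t l) ≤ lcmExp m t :=
  le_sup (f := m ∘ t) (mem_univ l)

lemma lcmExp_removeNth_le {k : ℕ} (t : Fin (k + 1) → ι) (l : Fin (k + 1)) :
    lcmExp m (l.removeNth t) ≤ lcmExp m t :=
  Finset.sup_le fun _ _ => le_lcmExp m t _

lemma lcmExp_cons {k : ℕ} (g : ι) (t : Fin k → ι) :
    lcmExp m (Fin.cons g t : Fin (k + 1) → ι) = m g ⊔ lcmExp m t := by
  simp [lcmExp, Fin.univ_succ, Function.comp_def, sup_map]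

lemma lcmExp_eq_sup_image [DecidableEq ι] {k : ℕ} (t : Fin k → ι) :
    lcmExp m t = (univ.image t).sup m :=
  (sup_image ..).symm

variable (σ K ι) in
/-- Indexed by tuple length: `k = 0` is a copy of the ring, so that `taylorDiff 0` is the
augmentation, and homological degree `i` of the resolution is `k = i + 1`. -/
abbrev TaylorModule (k : ℕ) : Type _ := (Fin k → ι) →₀ MvPolynomial σ K

variable (K) in
def taylorMonomial {k : ℕ} (t : Fin k → ι) (w : σ →₀ ℕ) : TaylorModule σ K ι k :=
  Finsupp.single t (monomial (w - lcmExp m t) 1)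

lemma single_monomial_eq_taylorMonomial {k : ℕ} (t : Fin k → ι) (u : σ →₀ ℕ) :
    Finsupp.single t (monomial u (1 : K)) = taylorMonomial K m t (u + lcmExp m t) := by
  rw [taylorMonomial, add_tsub_cancel_right]

lemma monomial_smul_taylorMonomial {k : ℕ} {t : Fin k → ι} {w : σ →₀ ℕ}
    (ht : lcmExp m t ≤ w) (u : σ →₀ ℕ) :
    monomial u (1 : K) • taylorMonomial K m t w = taylorMonomial K m t (u + w) := by
  rw [taylorMonomial, taylorMonomial, Finsupp.smul_single, smul_eq_mul, monomial_mul, mul_one,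
    add_tsub_assoc_of_le ht]

variable (K) in
def taylorDiff (k : ℕ) :
    TaylorModule σ K ι (k + 1) →ₗ[MvPolynomial σ K] TaylorModule σ K ι k :=
  Finsupp.linearCombination _ fun t =>
    ∑ l : Fin (k + 1), (-1 : K) ^ (l : ℕ) • taylorMonomial K m (l.removeNth t) (lcmExp m t)

lemma taylorDiff_taylorMonomial {k : ℕ} {t : Fin (k + 1) → ι} {w : σ →₀ ℕ}
    (ht : lcmExp m t ≤ w) :
    taylorDiff K m k (taylorMonomial K m t w) =
      ∑ l : Fin (k + 1), (-1 : K) ^ (l : ℕ) • taylorMonomial K m (l.removeNth t) w := by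
  have hw : taylorMonomial K m t w = monomial (w - lcmExp m t) (1 : K) • Finsupp.single t 1 := by
    rw [Finsupp.smul_single, smul_eq_mul, mul_one, taylorMonomial]
  rw [hw, map_smul, taylorDiff, Finsupp.linearCombination_single, one_smul, smul_sum]
  refine sum_congr rfl fun l _ => ?_
  rw [smul_comm, monomial_smul_taylorMonomial m (lcmExp_removeNth_le m t l),
    tsub_add_cancel_of_le ht]

lemma taylorMonomial_lcmExp {k : ℕ} (t : Fin k → ι) :
    taylorMonomial K m t (lcmExp m t) = Finsupp.single t 1 := by
  rw [taylorMonomial, tsub_self, monomial_zero', C_1]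

lemma taylorDiff_comp_taylorDiff (k : ℕ) : taylorDiff K m k ∘ₗ taylorDiff K m (k + 1) = 0 := by
  refine Finsupp.lhom_ext' fun t => LinearMap.ext_ring ?_
  rw [LinearMap.comp_apply, LinearMap.comp_apply, Finsupp.lsingle_apply,
    ← taylorMonomial_lcmExp, taylorDiff_taylorMonomial m le_rfl, map_sum, LinearMap.zero_comp,
    LinearMap.zero_apply]
  have hface (l : Fin (k + 2)) :
      taylorDiff K m k ((-1 : K) ^ (l : ℕ) • taylorMonomial K m (l.removeNth t) (lcmExp m t)) =
        ∑ j : Fin (k + 1), (-1 : K) ^ ((l : ℕ) + j) •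
          taylorMonomial K m (j.removeNth (l.removeNth t)) (lcmExp m t) := by
    rw [LinearMap.map_smul_of_tower, taylorDiff_taylorMonomial m (lcmExp_removeNth_le m t l),
      smul_sum]
    simp_rw [smul_smul, ← pow_add]
  rw [sum_congr rfl fun l _ => hface l]
  exact Fin.sum_sum_neg_one_pow_smul_removeNth_removeNth (fun u => taylorMonomial K m u _) t

variable (σ K ι) in
def taylorModuleBasis (k : ℕ) :
    Module.Basis (Σ _ : Fin k → ι, σ →₀ ℕ) K (TaylorModule σ K ι k) :=
  Finsupp.basis fun _ => basisMonomials σ K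

lemma taylorModuleBasis_apply {k : ℕ} (p : Σ _ : Fin k → ι, σ →₀ ℕ) :
    taylorModuleBasis σ K ι k p = Finsupp.single p.1 (monomial p.2 1) := by
  simp [taylorModuleBasis]

open Classical in
variable (K) in
/-- The contracting homotopy: in multidegree `w` it prepends a generator dividing `x^w`. Any
choice of that generator works, as long as it depends on `w` alone. -/
def taylorHomotopy (k : ℕ) : TaylorModule σ K ι k →ₗ[K] TaylorModule σ K ι (k + 1) :=
  (taylorModuleBasis σ K ι k).constr K fun p =>
    if h : ∃ g, m g ≤ p.2 + lcmExp m p.1 then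
      taylorMonomial K m (Fin.cons h.choose p.1) (p.2 + lcmExp m p.1)
    else 0

lemma taylorHomotopy_taylorMonomial {k : ℕ} {t : Fin k → ι} {w : σ →₀ ℕ}
    (ht : lcmExp m t ≤ w) (hw : ∃ g, m g ≤ w) :
    taylorHomotopy K m k (taylorMonomial K m t w) =
      taylorMonomial K m (Fin.cons hw.choose t) w := by
  obtain ⟨u, rfl⟩ : ∃ u, w = u + lcmExp m t := ⟨w - lcmExp m t, (tsub_add_cancel_of_le ht).symm⟩
  rw [← single_monomial_eq_taylorMonomial, ← taylorModuleBasis_apply (p := ⟨t, u⟩),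
    taylorHomotopy, Module.Basis.constr_basis, dif_pos hw]

lemma taylorDiff_homotopy_add_homotopy_taylorDiff_taylorMonomial {k : ℕ} {t : Fin (k + 1) → ι}
    {w : σ →₀ ℕ} (ht : lcmExp m t ≤ w) :
    taylorDiff K m (k + 1) (taylorHomotopy K m (k + 1) (taylorMonomial K m t w)) +
      taylorHomotopy K m k (taylorDiff K m k (taylorMonomial K m t w)) =
        taylorMonomial K m t w := by
  have hw : ∃ g, m g ≤ w := ⟨t 0, (le_lcmExp m t 0).trans ht⟩
  have hcons : lcmExp m (Fin.cons hw.choose t : Fin (k + 2) → ι) ≤ w := by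
    rw [lcmExp_cons]; exact sup_le hw.choose_spec ht
  -- face `0` of `g :: t` is `t`; face `l + 1` is `g :: (face l of t)` with the opposite sign
  rw [taylorHomotopy_taylorMonomial m ht hw, taylorDiff_taylorMonomial m hcons,
    Fin.sum_univ_succ, taylorDiff_taylorMonomial m ht, map_sum]
  simp_rw [LinearMap.map_smul, taylorHomotopy_taylorMonomial m
    ((lcmExp_removeNth_le m t _).trans ht) hw, Fin.removeNth_succ_cons, Fin.removeNth_zero,
    Fin.tail_cons, Fin.val_zero, pow_zero, one_smul, Fin.val_succ, pow_succ, mul_neg_one, neg_smul,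
    sum_neg_distrib, neg_add_cancel_right]

lemma taylorDiff_homotopy_add_homotopy_taylorDiff (k : ℕ) (x : TaylorModule σ K ι (k + 1)) :
    taylorDiff K m (k + 1) (taylorHomotopy K m (k + 1) x) +
      taylorHomotopy K m k (taylorDiff K m k x) = x := by
  suffices ((taylorDiff K m (k + 1)).restrictScalars K ∘ₗ taylorHomotopy K m (k + 1) +
      taylorHomotopy K m k ∘ₗ (taylorDiff K m k).restrictScalars K = LinearMap.id) from
    LinearMap.congr_fun this x
  refine (taylorModuleBasis σ K ι (k + 1)).ext fun p => ?_
  rw [taylorModuleBasis_apply, single_monomial_eq_taylorMonomial]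
  exact taylorDiff_homotopy_add_homotopy_taylorDiff_taylorMonomial m le_add_self

lemma range_taylorDiff (k : ℕ) :
    LinearMap.range (taylorDiff K m (k + 1)) = LinearMap.ker (taylorDiff K m k) :=
  LinearMap.range_eq_ker_of_homotopy (taylorDiff_comp_taylorDiff m k)
    (taylorHomotopy K m (k + 1)) (taylorHomotopy K m k) (map_zero _)
    (taylorDiff_homotopy_add_homotopy_taylorDiff m k)

variable (K) in
def taylorAug : TaylorModule σ K ι 1 →ₗ[MvPolynomial σ K] MvPolynomial σ K :=
  Finsupp.linearCombination _ fun t => monomial (lcmExp m t) 1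

lemma lcmExp_fin_one (t : Fin 1 → ι) : lcmExp m t = m (t 0) := by
  simp [lcmExp, univ_unique]

lemma taylorAug_eq :
    taylorAug K m = (Finsupp.uniqueLinearEquiv _ _ (Fin.elim0 : Fin 0 → ι)).toLinearMap ∘ₗ
      taylorDiff K m 0 := by
  ext t : 2
  simp [taylorAug, taylorDiff, taylorMonomial, lcmExp, Subsingleton.elim (Fin.tail t) Fin.elim0,
    bot_eq_zero]

lemma ker_taylorAug : LinearMap.ker (taylorAug K m) = LinearMap.ker (taylorDiff K m 0) := by
  rw [taylorAug_eq, LinearEquiv.ker_comp]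

lemma range_taylorAug :
    LinearMap.range (taylorAug K m) = Ideal.span (Set.range fun g => monomial (m g) (1 : K)) := by
  rw [taylorAug, Finsupp.range_linearCombination, Ideal.span,
    ← (Equiv.funUnique (Fin 1) ι).symm.surjective.range_comp]
  simp [Function.comp_def, lcmExp_fin_one]

lemma taylorAug_single_one_mem (t : Fin 1 → ι) :
    taylorAug K m (Finsupp.single t 1) ∈ homogeneousSubmodule σ K (lcmExp m t).degree := by
  rw [taylorAug, Finsupp.linearCombination_single, one_smul, mem_homogeneousSubmodule]
  exact isHomogeneous_monomial _ rfl

open Classical in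
lemma taylorDiff_single_one_apply {k : ℕ} (t : Fin (k + 1) → ι) (t' : Fin k → ι) :
    taylorDiff K m k (Finsupp.single t 1) t' =
      ∑ l : Fin (k + 1), if l.removeNth t = t' then
        monomial (lcmExp m t - lcmExp m t') ((-1 : K) ^ (l : ℕ)) else 0 := by
  simp only [taylorDiff, Finsupp.linearCombination_single, one_smul, Finsupp.finsetSum_apply,
    Finsupp.smul_apply, taylorMonomial, Finsupp.single_apply]
  refine sum_congr rfl fun l _ => ?_
  split_ifs with h
  · rw [h, smul_monomial, smul_eq_mul, mul_one]
  · exact smul_zero _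

lemma taylorDiff_single_one_apply_mem {k : ℕ} (t : Fin (k + 1) → ι) (t' : Fin k → ι) :
    taylorDiff K m k (Finsupp.single t 1) t' ∈
      homogeneousSubmodule σ K ((lcmExp m t).degree - (lcmExp m t').degree) := by
  rw [taylorDiff_single_one_apply]
  refine Submodule.sum_mem _ fun l _ => ?_
  split_ifs with h
  · subst h
    exact isHomogeneous_monomial _ (Finsupp.degree_tsub_of_le (lcmExp_removeNth_le m t l))
  · exact Submodule.zero_mem _

lemma taylorDiff_single_one_apply_eq_zero {k : ℕ} (t : Fin (k + 1) → ι) (t' : Fin k → ι)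
    (h : (lcmExp m t).degree < (lcmExp m t').degree) :
    taylorDiff K m k (Finsupp.single t 1) t' = 0 := by
  rw [taylorDiff_single_one_apply]
  refine sum_eq_zero fun l _ => if_neg fun hl => h.not_ge ?_
  exact Finsupp.degree_mono (hl ▸ lcmExp_removeNth_le m t l)

end TaylorComplex

open TaylorComplex in
theorem regLE_span_monomial {K : Type*} [Field K] {n : ℕ} {ι : Type} [Finite ι]
    (m : ι → Fin n →₀ ℕ) (e : ℕ)
    (hm : ∀ S : Finset ι, S.Nonempty → (S.sup m).degree + 1 ≤ e + S.card) :
    RegLE (Ideal.span (Set.range fun g => monomial (m g) (1 : K))) e := by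
  classical
  refine ⟨fun i => Fin (i + 1) → ι, fun _ => inferInstance, fun _ t => (lcmExp m t).degree,
    fun i => taylorDiff K m (i + 1), taylorAug K m, range_taylorAug m,
    taylorAug_single_one_mem m, fun _ t t' => ⟨taylorDiff_single_one_apply_mem m t t',
      taylorDiff_single_one_apply_eq_zero m t t'⟩,
    (range_taylorDiff m 0).trans (ker_taylorAug m).symm,
    fun i => range_taylorDiff m (i + 1), fun i t => ?_⟩
  have hS := hm (univ.image t) (univ_nonempty.image t)
  have hcard : #(univ.image t) ≤ i + 1 := card_image_le.trans (by simp)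
  change (lcmExp m t).degree ≤ e + i
  rw [lcmExp_eq_sup_image]
  omega

section UniformlyIncreasing

variable {n s : ℕ} (E : Fin s → Finset (Fin n))

lemma contVec_le (j : Fin n) : contVec E j ≤ s :=
  (card_filter_le _ _).trans (card_univ.trans (Fintype.card_fin s)).le

lemma mem_iff_sub_contVec_le (hmono : Monotone E) {i : Fin s} {j : Fin n} :
    j ∈ E i ↔ s - contVec E j ≤ i := by
  constructor
  · intro hj
    have : #(Ici i) ≤ contVec E j :=
      card_le_card fun i' hi' => mem_filter.2 ⟨mem_univ _, hmono (mem_Ici.1 hi') hj⟩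
    rw [Fin.card_Ici] at this
    omega
  · intro h
    by_contra hj
    have : contVec E j ≤ #(Ioi i) := card_le_card fun i' hi' =>
      mem_Ioi.2 (lt_of_not_ge fun hle => hj (hmono hle (mem_filter.1 hi').2))
    rw [Fin.card_Ioi] at this
    have := contVec_le E j
    omega

def CoversAt (w : Fin n →₀ ℕ) (i : ℕ) : Prop :=
  ∃ j, s - contVec E j ≤ i ∧ i < s - contVec E j + w j

def IsCover (w : Fin n →₀ ℕ) : Prop :=
  ∀ i : Fin s, CoversAt E w i

lemma IsCover.mono {c w : Fin n →₀ ℕ} (hc : IsCover E c) (hcw : c ≤ w) : IsCover E w :=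
  fun i => (hc i).imp fun j hj => ⟨hj.1, hj.2.trans_le (Nat.add_le_add_left (hcw j) _)⟩

def coverGens : Set (Fin n →₀ ℕ) :=
  {c | IsCover E c ∧ (∀ j, c j ≤ contVec E j) ∧ #{j | c j = contVec E j} ≤ 1}

lemma coverGens_finite : (coverGens E).Finite :=
  (Set.finite_Iic (Finsupp.equivFunOnFinite.symm (contVec E))).subset fun _ hc => hc.2.1

lemma mem_span_component_iff (hmono : Monotone E) {K : Type*} [CommSemiring K] (i : Fin s)
    (p : MvPolynomial (Fin n) K) :
    p ∈ Ideal.span ((fun j => (X j : MvPolynomial (Fin n) K) ^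
        (contVec E j + 1 - expVec E i j)) '' (E i : Set (Fin n))) ↔
      ∀ w ∈ p.support, CoversAt E w i := by
  have himg : ((fun j => (X j : MvPolynomial (Fin n) K) ^ (contVec E j + 1 - expVec E i j)) ''
      (E i : Set (Fin n))) = (fun u => monomial u (1 : K)) ''
        ((fun j => Finsupp.single j (contVec E j + 1 - expVec E i j)) '' (E i : Set (Fin n))) := by
    rw [Set.image_image]
    exact Set.image_congr fun j _ => X_pow_eq_monomial
  rw [himg, mem_ideal_span_monomial_image]
  refine forall₂_congr fun w _ => ?_
  simp only [Set.exists_mem_image, Finsupp.single_le_iff, mem_coe,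
    mem_iff_sub_contVec_le E hmono, expVec, Finsupp.ofSupportFinite_coe]
  refine exists_congr fun j => and_congr_right fun hj => ?_
  rw [if_pos hj]
  have := contVec_le E j
  omega

lemma IsCover.exists_coverGens_le (hpos : ∀ j, 0 < contVec E j) {w : Fin n →₀ ℕ}
    (hw : IsCover E w) : ∃ c ∈ coverGens E, c ≤ w := by
  by_cases hfull : ∃ j, contVec E j ≤ w j
  swap
  · simp only [not_exists, not_le] at hfull
    refine ⟨w, ⟨hw, fun j => (hfull j).le, ?_⟩, le_rfl⟩
    simp [fun j => (hfull j).ne]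
  obtain ⟨j₀, hj₀, hmax⟩ := exists_max_image {j | contVec E j ≤ w j} (contVec E)
    (by simpa [Finset.Nonempty] using hfull)
  rw [mem_filter] at hj₀
  -- keep the full window of `j₀`, whose window contains those of all other full vertices
  let c : Fin n →₀ ℕ := Finsupp.equivFunOnFinite.symm fun j =>
    if w j < contVec E j then w j else if j = j₀ then contVec E j else 0
  have hc (j : Fin n) : c j =
      if w j < contVec E j then w j else if j = j₀ then contVec E j else 0 := rfl
  refine ⟨c, ⟨fun i => ?_, fun j => ?_, ?_⟩, fun j => ?_⟩
  · obtain ⟨j, hj⟩ := hw i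
    by_cases hlt : w j < contVec E j
    · exact ⟨j, by rwa [hc, if_pos hlt]⟩
    · have := hmax j (mem_filter.2 ⟨mem_univ _, not_lt.1 hlt⟩)
      have := contVec_le E j₀
      exact ⟨j₀, by omega, by rw [hc, if_neg (not_lt.2 hj₀.2), if_pos rfl]; omega⟩
  · rw [hc]; split_ifs <;> omega
  · refine card_le_one.2 fun j hj j' hj' => ?_
    have key (j : Fin n) (hj : c j = contVec E j) : j = j₀ := by
      have := hpos j
      rw [hc] at hj
      split_ifs at hj <;> omega
    exact (key j (mem_filter.1 hj).2).trans (key j' (mem_filter.1 hj').2).symm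
  · rw [hc]; split_ifs <;> omega

lemma specialDual_eq_span_coverGens (hmono : Monotone E) (hpos : ∀ j, 0 < contVec E j)
    (K : Type*) [Field K] :
    specialDual K E = Ideal.span ((fun c => monomial c (1 : K)) '' coverGens E) := by
  ext p
  simp only [specialDual, Submodule.mem_iInf, mem_span_component_iff E hmono,
    mem_ideal_span_monomial_image]
  refine ⟨fun hp w hw => IsCover.exists_coverGens_le E hpos fun i => hp i w hw,
    fun hp i w hw => ?_⟩
  obtain ⟨c, hc, hcw⟩ := hp w hw
  exact hc.1.mono E hcw i

lemma contVec_pos (hs : 0 < s) (hlast : E ⟨s - 1, by omega⟩ = univ) (j : Fin n) :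
    0 < contVec E j :=
  card_pos.2 ⟨⟨s - 1, by omega⟩, mem_filter.2 ⟨mem_univ _, by rw [hlast]; exact mem_univ j⟩⟩

lemma contVec_eq_of_forall_mem {j : Fin n} (h : ∀ i, j ∈ E i) : contVec E j = s := by
  rw [contVec, filter_true_of_mem fun i _ => h i, card_univ, Fintype.card_fin]

lemma add_two_le_card {d : ℕ} (hd : 1 ≤ d) (hs : 0 < s) (hcard1 : 2 ≤ #(E ⟨0, hs⟩))
    (hstep : ∀ i : Fin s, ∀ h : i.val + 1 < s, #(E ⟨i.val + 1, h⟩) = #(E i) + d) :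
    ∀ q (hq : q < s), q + 2 ≤ #(E ⟨q, hq⟩)
  | 0, _ => hcard1
  | q + 1, hq => by
    have := add_two_le_card hd hs hcard1 hstep q (by omega)
    rw [hstep ⟨q, by omega⟩ hq]
    omega

end UniformlyIncreasing

/-- For the special dual `I^{[*]}(H)` of the inclusion ideal of a
uniformly increasing hypergraph on `n` vertices with containment vector
`a_1 ≥ ⋯ ≥ a_n` (vertices ordered so that each edge is an initial segment,
`E_s = X`), one has `reg(I^{[*]}(H)) ≤ a_2 + ⋯ + a_n`. -/
theorem stmt13 {K : Type*} [Field K]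
    {n s d : ℕ} (E : Fin s → Finset (Fin n)) (hs : 0 < s) (hd : 1 ≤ d)
    (hmono : Monotone E) (hcard1 : 2 ≤ (E ⟨0, hs⟩).card)
    (hstep : ∀ i : Fin s, ∀ h : i.val + 1 < s, (E ⟨i.val + 1, h⟩).card = (E i).card + d)
    (hn : 0 < n)
    (hinit : ∀ i : Fin s, ∀ j k : Fin n, j ≤ k → k ∈ E i → j ∈ E i)
    (hlast : E ⟨s - 1, by omega⟩ = Finset.univ) :
    RegLE (specialDual K E)
      (∑ j ∈ Finset.univ.erase (⟨0, hn⟩ : Fin n), contVec E j) := by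
  have hsn : s + 1 ≤ n := by
    have := add_two_le_card E hd hs hcard1 hstep (s - 1) (by omega)
    rw [hlast, card_univ, Fintype.card_fin] at this
    omega
  have ha₀ : contVec E ⟨0, hn⟩ = s := by
    obtain ⟨k, hk⟩ := card_pos.1 (by omega : 0 < #(E ⟨0, hs⟩))
    exact contVec_eq_of_forall_mem E fun i =>
      hinit i _ k (Fin.le_iff_val_le_val.2 (Nat.zero_le _))
        (hmono (Fin.le_iff_val_le_val.2 (Nat.zero_le _)) hk)
  have : Finite (coverGens E) := (coverGens_finite E).to_subtype
  rw [specialDual_eq_span_coverGens E hmono (contVec_pos E hs hlast), Set.image_eq_range]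
  refine regLE_span_monomial (Subtype.val : coverGens E → Fin n →₀ ℕ) _ fun S hS => ?_
  have hdeg := Finsupp.degree_sup_add_card_le hS (fun c _ => c.2.2.1) (fun c _ => c.2.2.2)
  rw [Fintype.card_fin, ← add_sum_erase _ _ (mem_univ ⟨0, hn⟩), ha₀] at hdeg
  omega
end
end
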